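/- Let ω be a primitive m-th root of unity (m ≥ 2). Then H_n(ωq, ω^2 q, ..., ω^{m-1} q) = ∏_{j ≤ n, m ∤ j} (1 - q^j), where H_n is the Rogers-Szegő polynomial in m-1 variables. -/

import Mathlib

/-- `(q)_n = (1-q)(1-q^2)⋯(1-q^n)`, with `(q)_0 = 1`. -/
noncomputable def qPoch (q : ℂ) (n : ℕ) : ℂ :=
  ∏ j ∈ Finset.range n, (1 - q ^ (j + 1))

/-- The Rogers-Szegő polynomial in `m-1` variables. -/
noncomputable def rogersSzegoMV (q : ℂ) (m n : ℕ) (t : Fin (m - 1) → ℂ) : ℂ :=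
  ∑ k ∈ Finset.Nat.antidiagonalTuple m n,
    (qPoch q n / ∏ i, qPoch q (k i)) *
      ∏ i : Fin (m - 1), t i ^ k (Fin.castLE (Nat.sub_le m 1) i)

/-!
Write `e(c) = qExp q c = ∑ cᵏ Xᵏ / (q)_k`, so that `H_n(t) = (q)_n [Xⁿ] e(t₁)⋯e(t_{m-1}) e(1)`.
The functional equation `(1 - cX) e(c)(X) = e(c)(qX)` and `∏_{i<m} (1 - ωⁱX) = 1 - Xᵐ` show that
`F = ∏_{i<m} e(ωⁱ)` satisfies `(1 - Xᵐ) F(X) = F(qX)`, hence `F = ∑_r X^{mr} / (qᵐ; qᵐ)_r`.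
At `tᵢ = ωⁱq` the generating function `G` satisfies `(1 - X) G(X) = F(qX)`, so its coefficients
telescope to `[Xⁿ] G = 1 / (qᵐ; qᵐ)_{⌊n/m⌋}`; and `(q)_n / (qᵐ; qᵐ)_{⌊n/m⌋}` is the product of the
`1 - qʲ` with `j ≤ n`, `m ∤ j`.
-/
open PowerSeries Finset

section qPochhammer

variable {q : ℂ}

@[simp]
lemma qPoch_zero (q : ℂ) : qPoch q 0 = 1 :=
  prod_range_zero _

lemma qPoch_succ (q : ℂ) (n : ℕ) : qPoch q (n + 1) = qPoch q n * (1 - q ^ (n + 1)) :=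
  prod_range_succ _ _

lemma one_sub_pow_ne_zero (hq : ∀ j : ℕ, 1 ≤ j → q ^ j ≠ 1) {n : ℕ} (hn : n ≠ 0) :
    1 - q ^ n ≠ 0 :=
  sub_ne_zero.2 (hq n (Nat.one_le_iff_ne_zero.2 hn)).symm

lemma qPoch_ne_zero (hq : ∀ j : ℕ, 1 ≤ j → q ^ j ≠ 1) (n : ℕ) : qPoch q n ≠ 0 :=
  prod_ne_zero_iff.2 fun j _ => one_sub_pow_ne_zero hq j.succ_ne_zero

lemma qPoch_pow_ne_zero (hq : ∀ j : ℕ, 1 ≤ j → q ^ j ≠ 1) {m : ℕ} (hm : 0 < m) (n : ℕ) :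
    qPoch (q ^ m) n ≠ 0 :=
  qPoch_ne_zero (fun j hj => by
    rw [← pow_mul]; exact hq _ (Nat.one_le_iff_ne_zero.2 (by positivity))) n

lemma qPoch_pow_succ_div (q : ℂ) (m n : ℕ) :
    qPoch (q ^ m) ((n + 1) / m) =
      qPoch (q ^ m) (n / m) * if m ∣ n + 1 then 1 - q ^ (n + 1) else 1 := by
  split_ifs with hd
  · rw [Nat.succ_div_of_dvd hd, qPoch_succ, ← pow_mul, ← Nat.succ_div_of_dvd hd,
      Nat.mul_div_cancel' hd]
  · rw [Nat.succ_div_of_not_dvd hd, mul_one]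

lemma qPoch_eq_prod_not_dvd_mul_qPoch_pow (q : ℂ) (m n : ℕ) :
    qPoch q n = (∏ j ∈ range (n + 1) with ¬ m ∣ j, (1 - q ^ j)) * qPoch (q ^ m) (n / m) := by
  induction n with
  | zero => simp [filter_singleton]
  | succ n ih =>
    rw [qPoch_succ, ih, qPoch_pow_succ_div, prod_filter, prod_filter, prod_range_succ _ (n + 1)]
    split_ifs <;> ring

end qPochhammer

noncomputable def qExp (q c : ℂ) : ℂ⟦X⟧ :=
  mk fun k => c ^ k / qPoch q k

@[simp]
lemma coeff_qExp (q c : ℂ) (n : ℕ) : coeff n (qExp q c) = c ^ n / qPoch q n :=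
  coeff_mk _ _

@[simp]
lemma constantCoeff_qExp (q c : ℂ) : constantCoeff (qExp q c) = 1 := by
  simp [← coeff_zero_eq_constantCoeff_apply]

lemma rescale_qExp (q c : ℂ) : rescale q (qExp q c) = qExp q (c * q) := by
  ext n
  simp only [coeff_rescale, coeff_qExp, mul_pow]
  ring

lemma one_sub_C_mul_X_mul_qExp {q : ℂ} (hq : ∀ j : ℕ, 1 ≤ j → q ^ j ≠ 1) (c : ℂ) :
    (1 - C c * X) * qExp q c = rescale q (qExp q c) := by
  ext n
  cases n with
  | zero => simp
  | succ n =>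
    have := qPoch_ne_zero hq n
    have := one_sub_pow_ne_zero hq n.succ_ne_zero
    rw [sub_mul, one_mul, mul_assoc, map_sub, coeff_C_mul, coeff_succ_X_mul, coeff_rescale,
      coeff_qExp, coeff_qExp, qPoch_succ]
    field_simp
    ring

lemma coeff_prod_fin {R : Type*} [CommSemiring R] {m : ℕ} (f : Fin m → R⟦X⟧) (n : ℕ) :
    coeff n (∏ i, f i) = ∑ k ∈ Nat.antidiagonalTuple m n, ∏ i, coeff (k i) (f i) := by
  rw [coeff_prod, ← piAntidiag_univ_fin_eq_antidiagonalTuple, finsuppAntidiag, sum_map,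
    ← sum_attach (piAntidiag univ n)]
  rfl

lemma rogersSzegoMV_succ_eq_qPoch_mul_coeff (q : ℂ) (m n : ℕ) (t : Fin m → ℂ) :
    rogersSzegoMV q (m + 1) n t = qPoch q n * coeff n ((∏ i, qExp q (t i)) * qExp q 1) := by
  have hsnoc :
      (∏ i, qExp q (t i)) * qExp q 1 = ∏ i, qExp q (Fin.snoc (α := fun _ => ℂ) t 1 i) := by
    simp [Fin.prod_univ_castSucc]
  rw [hsnoc, coeff_prod_fin, rogersSzegoMV, mul_sum]
  refine sum_congr rfl fun k _ => ?_
  simp only [coeff_qExp, prod_div_distrib, Fin.prod_univ_castSucc, Fin.snoc_castSucc,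
    Fin.snoc_last, one_pow, mul_one]
  rw [mul_div_assoc', div_mul_eq_mul_div]
  rfl

lemma prod_one_sub_C_pow_mul_X {R : Type*} [CommRing R] [IsDomain R] {m : ℕ} (hm : 0 < m)
    {ω : R} (hω : IsPrimitiveRoot ω m) :
    ∏ i ∈ range m, (1 - C (ω ^ i) * X) = (1 - X ^ m : R⟦X⟧) := by
  have := X_pow_sub_C_eq_prod (hω.map_of_injective (C_injective (R := R))) hm
    (rfl : (X : R⟦X⟧) ^ m = X ^ m)
  simpa [Polynomial.eval_prod] using (congrArg (Polynomial.eval 1) this).symm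

lemma one_sub_X_pow_mul_prod_qExp {q : ℂ} (hq : ∀ j : ℕ, 1 ≤ j → q ^ j ≠ 1) {m : ℕ}
    (hm : 0 < m) {ω : ℂ} (hω : IsPrimitiveRoot ω m) :
    (1 - X ^ m) * ∏ i ∈ range m, qExp q (ω ^ i) = rescale q (∏ i ∈ range m, qExp q (ω ^ i)) := by
  rw [← prod_one_sub_C_pow_mul_X hm hω, ← prod_mul_distrib, map_prod]
  exact prod_congr rfl fun i _ => one_sub_C_mul_X_mul_qExp hq _

lemma coeff_eq_of_one_sub_X_pow_mul_eq_rescale {q : ℂ} (hq : ∀ j : ℕ, 1 ≤ j → q ^ j ≠ 1)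
    {m : ℕ} (hm : 0 < m) {f : ℂ⟦X⟧} (hf : (1 - X ^ m) * f = rescale q f)
    (hf0 : constantCoeff f = 1) (n : ℕ) :
    coeff n f = if m ∣ n then (qPoch (q ^ m) (n / m))⁻¹ else 0 := by
  have hrec (n : ℕ) : (1 - q ^ n) * coeff n f = if m ≤ n then coeff (n - m) f else 0 := by
    have := congrArg (coeff n) hf
    rw [coeff_rescale, sub_mul, one_mul, map_sub, coeff_X_pow_mul'] at this
    linear_combination this
  have hmod (s r : ℕ) (hs : s < m) :
      coeff (s + m * r) f = if s = 0 then (qPoch (q ^ m) r)⁻¹ else 0 := by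
    induction r with
    | zero =>
      rcases eq_or_ne s 0 with rfl | hs0
      · simpa using hf0
      · have := hrec s
        rw [if_neg (by omega)] at this
        simpa [hs0] using (mul_eq_zero.1 this).resolve_left (one_sub_pow_ne_zero hq hs0)
    | succ r ih =>
      have hne := one_sub_pow_ne_zero hq (n := s + m * (r + 1)) (by positivity)
      have := hrec (s + m * (r + 1))
      rw [if_pos (by nlinarith), show s + m * (r + 1) - m = s + m * r by rw [mul_add]; omega, ih]
        at this
      rw [(eq_inv_mul_iff_mul_eq₀ hne).2 this]
      split_ifs with hs0
      · rw [qPoch_succ, hs0, zero_add, pow_mul, mul_inv, mul_comm]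
      · rw [mul_zero]
  conv_lhs => rw [← Nat.mod_add_div n m]
  rw [hmod _ _ (Nat.mod_lt n hm)]
  simp only [Nat.dvd_iff_mod_eq_zero]

lemma coeff_eq_of_one_sub_X_mul_eq_rescale {q : ℂ} (hq : ∀ j : ℕ, 1 ≤ j → q ^ j ≠ 1)
    {m : ℕ} (hm : 0 < m) {f g : ℂ⟦X⟧}
    (hf : ∀ n, coeff n f = if m ∣ n then (qPoch (q ^ m) (n / m))⁻¹ else 0)
    (hg : (1 - X) * g = rescale q f) (n : ℕ) :
    coeff n g = (qPoch (q ^ m) (n / m))⁻¹ := by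
  have hrec (n : ℕ) : coeff (n + 1) g = coeff n g + q ^ (n + 1) * coeff (n + 1) f := by
    have := congrArg (coeff (n + 1)) hg
    rw [coeff_rescale, sub_mul, one_mul, map_sub, coeff_succ_X_mul] at this
    linear_combination this
  induction n with
  | zero =>
    have := congrArg (coeff 0) hg
    simpa [coeff_rescale, hf] using this
  | succ n ih =>
    have := qPoch_pow_ne_zero hq hm (n / m)
    rw [hrec, ih, hf, qPoch_pow_succ_div]
    split_ifs with hd
    · have := one_sub_pow_ne_zero hq n.succ_ne_zero
      field_simp
      ring
    · simp

/-- For `ω` a primitive `m`-th root of unity (`m ≥ 2`) and a generic parameter `q`,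
`H_n(ωq, ω²q, …, ω^{m-1}q) = ∏_{j ≤ n, m∤j} (1 - q^j)`. -/
theorem rogersSzegoMV_at_q_times_roots_of_unity (m n : ℕ) (hm : 2 ≤ m) (ω : ℂ)
    (hω : IsPrimitiveRoot ω m) (q : ℂ) (hq : ∀ j : ℕ, 1 ≤ j → q ^ j ≠ 1) :
    rogersSzegoMV q m n (fun i => ω ^ ((i : ℕ) + 1) * q) =
      ∏ j ∈ (Finset.range (n + 1)).filter (fun j => ¬ m ∣ j), (1 - q ^ j) := by
  obtain ⟨k, rfl⟩ : ∃ k, m = k + 1 := ⟨m - 1, by omega⟩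
  set F := ∏ i ∈ range (k + 1), qExp q (ω ^ i)
  have hF := coeff_eq_of_one_sub_X_pow_mul_eq_rescale hq k.succ_pos
    (one_sub_X_pow_mul_prod_qExp hq k.succ_pos hω) (by simp)
  have hG :
      (1 - X) * ((∏ i : Fin k, qExp q (ω ^ ((i : ℕ) + 1) * q)) * qExp q 1) = rescale q F := by
    have := one_sub_C_mul_X_mul_qExp hq 1
    rw [map_one, one_mul] at this
    rw [mul_left_comm, this, map_prod, prod_range_succ', pow_zero,
      ← Fin.prod_univ_eq_prod_range (fun i => rescale q (qExp q (ω ^ (i + 1))))]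
    simp only [rescale_qExp]
  rw [rogersSzegoMV_succ_eq_qPoch_mul_coeff,
    coeff_eq_of_one_sub_X_mul_eq_rescale hq k.succ_pos hF hG,
    qPoch_eq_prod_not_dvd_mul_qPoch_pow q (k + 1) n,
    mul_inv_cancel_right₀ (qPoch_pow_ne_zero hq k.succ_pos _)]
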